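/- Let H ∈ H¹(T²) be even in ζ with mean m, let P₁H be its orthogonal projection onto span{e^{iθ}, e^{−iθ}, cos ζ}, and let P₍≥2₎H = H − m − P₁H. Define E[H] = (1/2)∫_{T²}(|∇H|² − |H|²) dθ dζ + m²/2 (with m² interpreted consistently with the normalisation of the mean). Then (1/(π√2))·√(E[H]) ≤ ‖P₍≥2₎H‖_{H¹} ≤ √(6·E[H]). -/
import Mathlib


/-- The energy `E[H] = 2π² Σ_{(k,l)≠(0,0)} (k² + l² - 1)|H_{k,l}|²` in Fourier coordinates. -/
noncomputable def energyF (c : ℤ × ℤ → ℂ) : ℝ :=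
  2 * Real.pi ^ 2 * ∑' p : ℤ × ℤ,
    (if p ≠ (0, 0) then ((p.1 : ℝ) ^ 2 + (p.2 : ℝ) ^ 2 - 1) * ‖c p‖ ^ 2 else 0)

/-- The squared `H¹`-norm of the projection `P₍≥2₎H` onto Fourier modes with `k² + l² ≥ 2`. -/
noncomputable def distH1sq (c : ℤ × ℤ → ℂ) : ℝ :=
  ∑' p : ℤ × ℤ,
    (if 2 ≤ p.1 ^ 2 + p.2 ^ 2 then (1 + (p.1 : ℝ) ^ 2 + (p.2 : ℝ) ^ 2) * ‖c p‖ ^ 2 else 0)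

lemma stmt9_aux (k l : ℤ) (h : ¬(k = 0 ∧ l = 0)) : 1 ≤ k ^ 2 + l ^ 2 := by
  rcases not_and_or.mp h with hk | hk
  · nlinarith [Int.one_le_abs hk, sq_nonneg l, sq_abs k, abs_nonneg k]
  · nlinarith [Int.one_le_abs hk, sq_nonneg k, sq_abs l, abs_nonneg l]

/-- Equivalence between the energy and the `H¹`-distance to the manifold `M(m)`:
`(1/(π√2))√E[H] ≤ ‖P₍≥2₎H‖_{H¹} ≤ √(6E[H])`, stated in Fourier coordinates for
an `H¹`-function even in `ζ`. -/
theorem stmt9 (c : ℤ × ℤ → ℂ)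
    (heven : ∀ k l : ℤ, c (k, -l) = c (k, l))
    (hsum : Summable fun p : ℤ × ℤ => (1 + (p.1 : ℝ) ^ 2 + (p.2 : ℝ) ^ 2) * ‖c p‖ ^ 2) :
    1 / (Real.pi * Real.sqrt 2) * Real.sqrt (energyF c) ≤ Real.sqrt (distH1sq c) ∧
    Real.sqrt (distH1sq c) ≤ Real.sqrt (6 * energyF c) := by
  set f : ℤ × ℤ → ℝ := fun p =>
    if p ≠ (0, 0) then ((p.1 : ℝ) ^ 2 + (p.2 : ℝ) ^ 2 - 1) * ‖c p‖ ^ 2 else 0 with hfdef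
  set g : ℤ × ℤ → ℝ := fun p =>
    if 2 ≤ p.1 ^ 2 + p.2 ^ 2 then (1 + (p.1 : ℝ) ^ 2 + (p.2 : ℝ) ^ 2) * ‖c p‖ ^ 2 else 0
    with hgdef
  -- key pointwise facts
  have key : ∀ p : ℤ × ℤ, 0 ≤ f p ∧ f p ≤ g p ∧ g p ≤ 3 * f p ∧
      f p ≤ (1 + (p.1 : ℝ) ^ 2 + (p.2 : ℝ) ^ 2) * ‖c p‖ ^ 2 := by
    rintro ⟨k, l⟩
    have hc : (0:ℝ) ≤ ‖c (k, l)‖ ^ 2 := sq_nonneg _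
    by_cases h2 : 2 ≤ k ^ 2 + l ^ 2
    · have hne : (k, l) ≠ ((0:ℤ), (0:ℤ)) := by
        rintro h; simp only [Prod.mk.injEq] at h; obtain ⟨rfl, rfl⟩ := h; norm_num at h2
      have h2r : (2:ℝ) ≤ (k:ℝ) ^ 2 + (l:ℝ) ^ 2 := by exact_mod_cast h2
      simp only [hfdef, hgdef, if_pos h2, if_pos hne]
      refine ⟨by nlinarith, by nlinarith, by nlinarith, by nlinarith⟩
    · by_cases h0 : (k, l) = ((0:ℤ), (0:ℤ))
      · simp only [Prod.mk.injEq] at h0; obtain ⟨rfl, rfl⟩ := h0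
        simp only [hfdef, hgdef, if_neg h2]
        norm_num
      · have h1 : 1 ≤ k ^ 2 + l ^ 2 := by
          apply stmt9_aux; rintro ⟨h1', h2'⟩; exact h0 (by simp [h1', h2'])
        have heq : k ^ 2 + l ^ 2 = 1 := by omega
        have heqr : (k:ℝ) ^ 2 + (l:ℝ) ^ 2 = 1 := by exact_mod_cast heq
        simp only [hfdef, hgdef, if_neg h2, if_pos h0, heqr]
        norm_num
        positivity
  have hf0 : ∀ p, 0 ≤ f p := fun p => (key p).1
  have hg0 : ∀ p, 0 ≤ g p := fun p => le_trans (key p).1 (key p).2.1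
  have hSf : Summable f := hsum.of_nonneg_of_le hf0 (fun p => (key p).2.2.2)
  have hSg : Summable g := (hSf.mul_left 3).of_nonneg_of_le hg0 (fun p => (key p).2.2.1)
  have hS0 : 0 ≤ ∑' p, f p := tsum_nonneg hf0
  have hST : ∑' p, f p ≤ ∑' p, g p := Summable.tsum_le_tsum (fun p => (key p).2.1) hSf hSg
  have hT3S : ∑' p, g p ≤ 3 * ∑' p, f p := by
    calc ∑' p, g p ≤ ∑' p, 3 * f p := Summable.tsum_le_tsum (fun p => (key p).2.2.1) hSg (hSf.mul_left 3)
    _ = 3 * ∑' p, f p := tsum_mul_left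
  have hE : energyF c = 2 * Real.pi ^ 2 * ∑' p, f p := rfl
  have hD : distH1sq c = ∑' p, g p := rfl
  have hpi : (0:ℝ) < Real.pi := Real.pi_pos
  have hpi3 : (3:ℝ) < Real.pi := Real.pi_gt_three
  have hs2 : Real.sqrt 2 > 0 := Real.sqrt_pos.mpr (by norm_num)
  constructor
  · rw [hE, hD]
    have hlhs : 1 / (Real.pi * Real.sqrt 2) * Real.sqrt (2 * Real.pi ^ 2 * ∑' p, f p)
        = Real.sqrt (∑' p, f p) := by
      rw [Real.sqrt_mul (by positivity), Real.sqrt_mul (by norm_num),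
        Real.sqrt_sq hpi.le]
      field_simp
    rw [hlhs]
    exact Real.sqrt_le_sqrt hST
  · rw [hE, hD]
    apply Real.sqrt_le_sqrt
    have h4 : (0:ℝ) ≤ (∑' p, f p) * (4 * Real.pi ^ 2 - 1) :=
      mul_nonneg hS0 (by nlinarith)
    nlinarith [hT3S, h4]
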